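/- There exists a function D₁ : MorseGauges × ℝ≥1 → ℝ≥1 such that in any geodesic metric space, if γ₁ and γ₂ are M-Morse C-quasi-geodesic rays with γ₁(0) = γ₂(0) and finite Hausdorff distance, then their Hausdorff distance is at most D₁(M, C). -/

import Mathlib

open Set Metric

universe u

/-- `γ` restricted to `I` is a `(lam, eps)`-quasi-geodesic. -/
def IsQuasiGeodesicOn {X : Type*} [MetricSpace X] (γ : ℝ → X) (I : Set ℝ)
    (lam eps : ℝ) : Prop :=
  ∀ s ∈ I, ∀ t ∈ I,
    (1 / lam) * |s - t| - eps ≤ dist (γ s) (γ t) ∧ dist (γ s) (γ t) ≤ lam * |s - t| + eps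

/-- `γ` restricted to `I` is a (unit-speed) geodesic. -/
def IsGeodesicOn {X : Type*} [MetricSpace X] (γ : ℝ → X) (I : Set ℝ) : Prop :=
  ∀ s ∈ I, ∀ t ∈ I, dist (γ s) (γ t) = |s - t|

/-- A metric space is geodesic if any two points are joined by a geodesic. -/
def GeodesicSpace (X : Type*) [MetricSpace X] : Prop :=
  ∀ x y : X, ∃ γ : ℝ → X, γ 0 = x ∧ γ (dist x y) = y ∧ IsGeodesicOn γ (Icc 0 (dist x y))

/-- A Morse gauge: an increasing map `ℝ≥1 × ℝ≥0 → ℝ≥0`, continuous in the second argument. -/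
def IsMorseGauge (M : ℝ → ℝ → ℝ) : Prop :=
  (∀ l e, 1 ≤ l → 0 ≤ e → 0 ≤ M l e) ∧
  (∀ l l' e e', 1 ≤ l → 0 ≤ e → l ≤ l' → e ≤ e' → M l e ≤ M l' e') ∧
  (∀ l, 1 ≤ l → ContinuousOn (fun e => M l e) (Ici 0))

/-- Pointwise partial order on Morse gauges (on the domain `ℝ≥1 × ℝ≥0`). -/
def GaugeLE (M N : ℝ → ℝ → ℝ) : Prop :=
  ∀ l e, 1 ≤ l → 0 ≤ e → M l e ≤ N l e

/-- `γ` restricted to `I` is `M`-Morse: every continuous `(lam, eps)`-quasi-geodesic with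
endpoints on `γ` lies in the closed `M lam eps`-neighbourhood of `γ`. -/
def IsMorseWith {X : Type*} [MetricSpace X] (M : ℝ → ℝ → ℝ) (γ : ℝ → X) (I : Set ℝ) : Prop :=
  ∀ lam eps : ℝ, 1 ≤ lam → 0 ≤ eps →
    ∀ (η : ℝ → X) (a b : ℝ), a ≤ b →
      ContinuousOn η (Icc a b) → IsQuasiGeodesicOn η (Icc a b) lam eps →
      η a ∈ γ '' I → η b ∈ γ '' I →
      ∀ t ∈ Icc a b, ∃ s ∈ I, dist (η t) (γ s) ≤ M lam eps

/-- The constant `δ_M` associated to a Morse gauge `M`. -/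
def morseDelta (M : ℝ → ℝ → ℝ) : ℝ :=
  max (4 * M 1 (2 * M 5 0) + 2 * M 5 0) (8 * M 3 0)

/-!
Replace `γ₂` by the continuous broken geodesic `σ` through the points `γ₂ k`, which stays within
`4C` of `γ₂`. Take a point `x = γ₁ t` far out; since the Hausdorff distance is finite, some
`γ₂ w₀` is near `x`, and a point `σ a` of `σ [0, w₀]` closest to `x` then has `a ≥ v`, because `x`
is far from the base point. Following `σ` up to time `a` and then a geodesic to `x` gives a
continuous `(2C + 1, 9C)`-quasi-geodesic with both endpoints on `γ₁`: the geodesic leg cannot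
backtrack along `σ`, as `σ a` is a closest point to `x`. The Morse property of `γ₁` puts `σ v`,
hence `γ₂ v`, within `M (2C + 1) (9C) + 4C` of `γ₁`, and by symmetry this bounds the Hausdorff
distance.
-/


section

variable {X : Type*} [MetricSpace X]

lemma IsGeodesicOn.continuousOn {γ : ℝ → X} {I : Set ℝ} (hγ : IsGeodesicOn γ I) :
    ContinuousOn γ I :=
  (LipschitzOnWith.of_dist_le_mul (K := 1) fun s hs t ht => by
    rw [hγ s hs t ht, NNReal.coe_one, one_mul, Real.dist_eq]).continuousOn

lemma IsQuasiGeodesicOn.mono {γ : ℝ → X} {I J : Set ℝ} {lam eps : ℝ}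
    (hγ : IsQuasiGeodesicOn γ I lam eps) (hJI : J ⊆ I) : IsQuasiGeodesicOn γ J lam eps :=
  fun s hs t ht => hγ s (hJI hs) t (hJI ht)

lemma isQuasiGeodesicOn_of_le {γ : ℝ → X} {I : Set ℝ} {lam eps : ℝ}
    (h : ∀ s ∈ I, ∀ t ∈ I, s ≤ t →
      (1 / lam) * (t - s) - eps ≤ dist (γ s) (γ t) ∧ dist (γ s) (γ t) ≤ lam * (t - s) + eps) :
    IsQuasiGeodesicOn γ I lam eps := by
  intro s hs t ht
  rcases le_total s t with hst | hts
  · rw [abs_of_nonpos (sub_nonpos.2 hst), neg_sub]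
    exact h s hs t ht hst
  · rw [abs_of_nonneg (sub_nonneg.2 hts), dist_comm]
    exact h t ht s hs hts

lemma IsQuasiGeodesicOn.of_dist_le {γ σ : ℝ → X} {I : Set ℝ} {lam eps r : ℝ}
    (hγ : IsQuasiGeodesicOn γ I lam eps) (hσ : ∀ t ∈ I, dist (σ t) (γ t) ≤ r) :
    IsQuasiGeodesicOn σ I lam (eps + 2 * r) := by
  intro s hs t ht
  have h₁ := dist_triangle4 (γ s) (σ s) (σ t) (γ t)
  have h₂ := dist_triangle4 (σ s) (γ s) (γ t) (σ t)
  rw [dist_comm (γ s) (σ s)] at h₁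
  rw [dist_comm (γ t) (σ t)] at h₂
  have := hσ s hs
  have := hσ t ht
  have := hγ s hs t ht
  constructor <;> linarith

namespace GeodesicSpace

variable (hX : GeodesicSpace X)

noncomputable def segment (x y : X) : ℝ → X := (hX x y).choose

lemma segment_zero (x y : X) : hX.segment x y 0 = x := (hX x y).choose_spec.1

lemma segment_dist (x y : X) : hX.segment x y (dist x y) = y := (hX x y).choose_spec.2.1

lemma isGeodesicOn_segment (x y : X) : IsGeodesicOn (hX.segment x y) (Icc 0 (dist x y)) :=
  (hX x y).choose_spec.2.2

/-- The path through `p 0, p 1, p 2, …` that runs along a geodesic from `p k` to `p (k + 1)`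
during the time interval `[k, k + 1]`. -/
noncomputable def brokenGeodesic (p : ℕ → X) (w : ℝ) : X :=
  hX.segment (p ⌊w⌋₊) (p (⌊w⌋₊ + 1)) ((w - ⌊w⌋₊) * dist (p ⌊w⌋₊) (p (⌊w⌋₊ + 1)))

variable {hX} {p : ℕ → X}

lemma brokenGeodesic_natCast (k : ℕ) : hX.brokenGeodesic p k = p k := by
  simp [brokenGeodesic, segment_zero]

lemma brokenGeodesic_eq_segment {k : ℕ} {w : ℝ} (hw : w ∈ Icc (k : ℝ) (k + 1)) :
    hX.brokenGeodesic p w = hX.segment (p k) (p (k + 1)) ((w - k) * dist (p k) (p (k + 1))) := by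
  rcases hw.2.lt_or_eq with hlt | rfl
  · have hfloor : ⌊w⌋₊ = k := (Nat.floor_eq_iff ((Nat.cast_nonneg k).trans hw.1)).2 ⟨hw.1, hlt⟩
    rw [brokenGeodesic, hfloor]
  · rw [← Nat.cast_succ, brokenGeodesic_natCast, Nat.cast_succ, add_sub_cancel_left, one_mul,
      segment_dist]

lemma dist_brokenGeodesic_le {k : ℕ} {w : ℝ} (hw : w ∈ Icc (k : ℝ) (k + 1)) :
    dist (hX.brokenGeodesic p w) (p k) ≤ dist (p k) (p (k + 1)) := by
  set d := dist (p k) (p (k + 1))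
  have hmem : (w - k) * d ∈ Icc 0 d :=
    ⟨mul_nonneg (by linarith [hw.1]) dist_nonneg,
      mul_le_of_le_one_left dist_nonneg (by linarith [hw.2])⟩
  have hgeo := hX.isGeodesicOn_segment (p k) (p (k + 1)) _ hmem 0 ⟨le_rfl, dist_nonneg⟩
  rw [segment_zero, sub_zero, abs_of_nonneg hmem.1] at hgeo
  rw [brokenGeodesic_eq_segment hw, hgeo]
  exact hmem.2

lemma continuousOn_brokenGeodesic_Icc (k : ℕ) :
    ContinuousOn (hX.brokenGeodesic p) (Icc (k : ℝ) (k + 1)) := by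
  set d := dist (p k) (p (k + 1))
  have hmaps : MapsTo (fun w => (w - k) * d) (Icc (k : ℝ) (k + 1)) (Icc 0 d) := fun w hw =>
    ⟨mul_nonneg (by linarith [hw.1]) dist_nonneg,
      mul_le_of_le_one_left dist_nonneg (by linarith [hw.2])⟩
  refine ContinuousOn.congr ?_ fun w hw => brokenGeodesic_eq_segment hw
  exact (hX.isGeodesicOn_segment _ _).continuousOn.comp (by fun_prop) hmaps

lemma continuousOn_brokenGeodesic : ContinuousOn (hX.brokenGeodesic p) (Ici 0) := by
  have hIcc : ∀ n : ℕ, ContinuousOn (hX.brokenGeodesic p) (Icc 0 n) := by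
    intro n
    induction n with
    | zero => simp
    | succ n ih =>
      rw [← Icc_union_Icc_eq_Icc (Nat.cast_nonneg n) (by simp), Nat.cast_succ]
      exact ih.union_of_isClosed (continuousOn_brokenGeodesic_Icc n) isClosed_Icc isClosed_Icc
  intro w hw
  refine ((hIcc (⌊w⌋₊ + 1)).continuousWithinAt ⟨hw, ?_⟩).mono_of_mem_nhdsWithin ?_
  · exact_mod_cast (Nat.lt_floor_add_one w).le
  · exact mem_nhdsWithin.2 ⟨Iio _, isOpen_Iio, by exact_mod_cast Nat.lt_floor_add_one w,
      fun y hy => ⟨hy.2, hy.1.le⟩⟩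

end GeodesicSpace

lemma IsQuasiGeodesicOn.exists_continuousOn_dist_le (hX : GeodesicSpace X) {γ : ℝ → X}
    {lam eps : ℝ} (hlam : 0 ≤ lam) (hγ : IsQuasiGeodesicOn γ (Ici 0) lam eps) :
    ∃ σ : ℝ → X, σ 0 = γ 0 ∧ ContinuousOn σ (Ici 0) ∧
      ∀ w, 0 ≤ w → dist (σ w) (γ w) ≤ 2 * (lam + eps) := by
  have hunit : ∀ k : ℕ, ∀ w ∈ Icc (k : ℝ) (k + 1), dist (γ k) (γ w) ≤ lam + eps := by
    intro k w hw
    have hkw : |(k : ℝ) - w| ≤ 1 := abs_le.2 ⟨by linarith [hw.2], by linarith [hw.1]⟩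
    have := (hγ k (mem_Ici.2 (Nat.cast_nonneg k)) w ((Nat.cast_nonneg k).trans hw.1)).2
    nlinarith
  refine ⟨hX.brokenGeodesic fun k => γ k, ?_, GeodesicSpace.continuousOn_brokenGeodesic, ?_⟩
  · simpa using GeodesicSpace.brokenGeodesic_natCast (hX := hX) (p := fun k => γ k) 0
  intro w hw
  set k := ⌊w⌋₊
  have hk : w ∈ Icc (k : ℝ) (k + 1) := ⟨Nat.floor_le hw, (Nat.lt_floor_add_one w).le⟩
  have hstep := hunit k (k + 1) ⟨by linarith, le_rfl⟩
  calc dist (hX.brokenGeodesic (fun k => γ k) w) (γ w)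
      ≤ dist (hX.brokenGeodesic (fun k => γ k) w) (γ k) + dist (γ k) (γ w) := dist_triangle _ _ _
    _ ≤ (lam + eps) + (lam + eps) := by
        gcongr
        · exact (GeodesicSpace.dist_brokenGeodesic_le hk).trans (by exact_mod_cast hstep)
        · exact hunit k w hk
    _ = 2 * (lam + eps) := by ring

noncomputable def concatAt {α : Type*} (σ : ℝ → α) (a : ℝ) (g : ℝ → α) (w : ℝ) : α :=
  if w < a then σ w else g (w - a)

section concatAt

variable {α : Type*} {σ g : ℝ → α} {a : ℝ}

lemma concatAt_of_le (hg : g 0 = σ a) {w : ℝ} (hw : w ≤ a) : concatAt σ a g w = σ w := by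
  rcases hw.lt_or_eq with hlt | rfl
  · simp [concatAt, hlt]
  · simp [concatAt, hg]

lemma concatAt_of_ge {w : ℝ} (hw : a ≤ w) : concatAt σ a g w = g (w - a) := by
  simp [concatAt, hw.not_gt]

lemma continuousOn_concatAt [TopologicalSpace α] {b : ℝ} (ha : 0 ≤ a) (hb : 0 ≤ b)
    (hσ : ContinuousOn σ (Icc 0 a)) (hg : ContinuousOn g (Icc 0 b)) (hg0 : g 0 = σ a) :
    ContinuousOn (concatAt σ a g) (Icc 0 (a + b)) := by
  rw [← Icc_union_Icc_eq_Icc ha (by linarith)]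
  refine ContinuousOn.union_of_isClosed ?_ ?_ isClosed_Icc isClosed_Icc
  · exact hσ.congr fun w hw => concatAt_of_le hg0 hw.2
  · refine ContinuousOn.congr ?_ fun w hw => concatAt_of_ge hw.1
    exact hg.comp (by fun_prop) fun w hw => ⟨by linarith [hw.1], by linarith [hw.2]⟩

lemma isQuasiGeodesicOn_concatAt {σ g : ℝ → X} {x : X} {lam eps : ℝ} (hlam : 1 ≤ lam)
    (heps : 0 ≤ eps) (hσ : IsQuasiGeodesicOn σ (Icc 0 a) lam eps)
    (hmin : IsMinOn (fun s => dist (σ s) x) (Icc 0 a) a)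
    (hg : IsGeodesicOn g (Icc 0 (dist (σ a) x))) (hg0 : g 0 = σ a) (hgx : g (dist (σ a) x) = x) :
    IsQuasiGeodesicOn (concatAt σ a g) (Icc 0 (a + dist (σ a) x)) (2 * lam + 1) eps := by
  set P := dist (σ a) x
  have hP : 0 ≤ P := dist_nonneg
  have hinv_le : 1 / (2 * lam + 1) ≤ 1 / lam := one_div_le_one_div_of_le (by linarith) (by linarith)
  have hinv_le_one : 1 / (2 * lam + 1) ≤ 1 := by rw [div_le_one (by linarith)]; linarith
  refine isQuasiGeodesicOn_of_le fun s hs u hu hsu => ?_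
  rcases le_or_gt u a with hua | hau
  · rw [concatAt_of_le hg0 hua, concatAt_of_le hg0 (hsu.trans hua)]
    have h := hσ s ⟨hs.1, hsu.trans hua⟩ u ⟨hu.1, hua⟩
    rw [abs_of_nonpos (by linarith), neg_sub] at h
    constructor <;> nlinarith
  rcases le_or_gt a s with has | hsa
  · rw [concatAt_of_ge has, concatAt_of_ge (has.trans hsu),
      hg _ ⟨by linarith, by linarith [hs.2]⟩ _ ⟨by linarith, by linarith [hu.2]⟩,
      abs_of_nonpos (by linarith)]
    constructor <;> nlinarith
  · set b := u - a
    have hgb : g b = concatAt σ a g u := (concatAt_of_ge hau.le).symm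
    rw [concatAt_of_le hg0 hsa.le, ← hgb]
    have hσs := hσ s ⟨hs.1, hsa.le⟩ a ⟨hs.1.trans hsa.le, le_rfl⟩
    rw [abs_of_nonpos (by linarith), neg_sub] at hσs
    have hbmem : b ∈ Icc 0 P := ⟨by linarith, by linarith [hu.2]⟩
    have hgσ : dist (σ a) (g b) = b := by
      rw [← hg0, hg _ ⟨le_rfl, hP⟩ _ hbmem, zero_sub, abs_neg, abs_of_nonneg hbmem.1]
    have hgx' : dist (g b) x = P - b := by
      rw [← hgx, hg _ hbmem _ ⟨hP, le_rfl⟩, abs_of_nonpos (by linarith [hbmem.2])]; ring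
    have hfar : P ≤ dist (σ s) x := hmin ⟨hs.1, hsa.le⟩
    have htri₁ := dist_triangle (σ s) (g b) x
    have htri₂ := dist_triangle (σ s) (g b) (σ a)
    have htri₃ := dist_triangle (σ s) (σ a) (g b)
    rw [dist_comm (g b) (σ a)] at htri₂
    have hb : b ≤ dist (σ s) (g b) := by linarith
    have has : (1 / lam) * (a - s) - eps - b ≤ dist (σ s) (g b) := by linarith
    constructor
    · -- weigh `hb` by `lam + 1` and `has` by `lam`
      have hlam_inv : lam * ((1 / lam) * (a - s)) = a - s := by field_simp
      rw [one_div_mul_eq_div, sub_le_iff_le_add, div_le_iff₀ (by linarith)]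
      nlinarith
    · nlinarith

end concatAt

lemma IsMorseWith.exists_dist_le_of_isMinOn (hX : GeodesicSpace X) {M : ℝ → ℝ → ℝ}
    {γ σ : ℝ → X} {I : Set ℝ} {lam eps a : ℝ} {x : X} (hγ : IsMorseWith M γ I) (hlam : 1 ≤ lam)
    (heps : 0 ≤ eps) (ha : 0 ≤ a) (hσc : ContinuousOn σ (Icc 0 a))
    (hσ : IsQuasiGeodesicOn σ (Icc 0 a) lam eps) (hσ0 : σ 0 ∈ γ '' I) (hx : x ∈ γ '' I)
    (hmin : IsMinOn (fun s => dist (σ s) x) (Icc 0 a) a) :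
    ∀ v ∈ Icc 0 a, ∃ s ∈ I, dist (σ v) (γ s) ≤ M (2 * lam + 1) eps := by
  intro v hv
  obtain ⟨g, hg0, hgx, hg⟩ := hX (σ a) x
  have hP : 0 ≤ dist (σ a) x := dist_nonneg
  have hΩ0 : concatAt σ a g 0 = σ 0 := concatAt_of_le hg0 ha
  have hΩx : concatAt σ a g (a + dist (σ a) x) = x := by
    rw [concatAt_of_ge (by linarith), add_sub_cancel_left, hgx]
  have h := hγ (2 * lam + 1) eps (by linarith) heps (concatAt σ a g) 0 (a + dist (σ a) x)
    (by linarith) (continuousOn_concatAt ha hP hσc hg.continuousOn hg0)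
    (isQuasiGeodesicOn_concatAt hlam heps hσ hmin hg hg0 hgx) (hΩ0.symm ▸ hσ0) (hΩx.symm ▸ hx) v
    ⟨hv.1, by linarith [hv.2]⟩
  rwa [concatAt_of_le hg0 hv.2] at h

lemma infDist_le_of_isMorseWith (hX : GeodesicSpace X) {M : ℝ → ℝ → ℝ} {C : ℝ}
    {γ₁ γ₂ : ℝ → X} (hC : 1 ≤ C) (hq₁ : IsQuasiGeodesicOn γ₁ (Ici 0) C C)
    (hm₁ : IsMorseWith M γ₁ (Ici 0)) (hq₂ : IsQuasiGeodesicOn γ₂ (Ici 0) C C) (h0 : γ₁ 0 = γ₂ 0)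
    (hfin : hausdorffEDist (γ₁ '' Ici 0) (γ₂ '' Ici 0) ≠ ⊤) {v : ℝ} (hv : 0 ≤ v) :
    infDist (γ₂ v) (γ₁ '' Ici 0) ≤ M (2 * C + 1) (9 * C) + 4 * C := by
  obtain ⟨σ, hσ0, hσc, hσγ⟩ := hq₂.exists_continuousOn_dist_le hX (by linarith)
  replace hσγ : ∀ w, 0 ≤ w → dist (σ w) (γ₂ w) ≤ 4 * C := fun w hw =>
    (hσγ w hw).trans_eq (by ring)
  have hσqg : IsQuasiGeodesicOn σ (Ici 0) C (9 * C) := by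
    have := hq₂.of_dist_le hσγ
    rwa [show C + 2 * (4 * C) = 9 * C by ring] at this
  set K := hausdorffDist (γ₁ '' Ici 0) (γ₂ '' Ici 0)
  set t := C * (C * v + 10 * C + K + 1)
  have ht : 0 ≤ t := by
    have : 0 ≤ K := hausdorffDist_nonneg
    positivity
  set x := γ₁ t
  have hx_far : C * v + 9 * C + K + 1 ≤ dist (γ₂ 0) x := by
    have h := (hq₁ 0 self_mem_Ici t ht).1
    rw [zero_sub, abs_neg, abs_of_nonneg ht, h0, one_div_mul_eq_div,
      mul_div_cancel_left₀ _ (by linarith)] at h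
    linarith
  obtain ⟨_, ⟨w₀, (hw₀ : 0 ≤ w₀), rfl⟩, hxw₀⟩ : ∃ y ∈ γ₂ '' Ici 0, dist x y < K + 1 :=
    (infDist_lt_iff ⟨_, mem_image_of_mem _ self_mem_Ici⟩).1 <|
      (infDist_le_hausdorffDist_of_mem (mem_image_of_mem _ ht) hfin).trans_lt (lt_add_one K)
  obtain ⟨a, ha, hmin⟩ : ∃ a ∈ Icc 0 w₀, IsMinOn (fun s => dist (σ s) x) (Icc 0 w₀) a :=
    isCompact_Icc.exists_isMinOn (nonempty_Icc.2 hw₀)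
      ((continuous_id.dist continuous_const).comp_continuousOn (hσc.mono Icc_subset_Ici_self))
  -- the closest point of `σ` to `x` is far out, since `x` is far from `γ₂ 0` but near `γ₂ w₀`
  have hva : v ≤ a := by
    by_contra! hav
    have hσa : dist (σ a) x ≤ dist (σ w₀) x := hmin ⟨hw₀, le_rfl⟩
    have hγ₂a := (hq₂ 0 self_mem_Ici a ha.1).2
    rw [zero_sub, abs_neg, abs_of_nonneg ha.1] at hγ₂a
    have h₁ := dist_triangle4 (γ₂ 0) (γ₂ a) (σ a) x
    have h₂ := dist_triangle (σ w₀) (γ₂ w₀) x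
    rw [dist_comm (γ₂ a) (σ a)] at h₁
    rw [dist_comm (γ₂ w₀) x] at h₂
    have := mul_le_mul_of_nonneg_left hav.le (by linarith : (0 : ℝ) ≤ C)
    linarith [hσγ a ha.1, hσγ w₀ hw₀]
  obtain ⟨s, hs, hds⟩ := hm₁.exists_dist_le_of_isMinOn hX hC (by linarith) ha.1
    (hσc.mono Icc_subset_Ici_self) (hσqg.mono Icc_subset_Ici_self)
    ⟨0, self_mem_Ici, h0.trans hσ0.symm⟩ (mem_image_of_mem _ ht)
    (hmin.on_subset (Icc_subset_Icc_right ha.2)) v ⟨hv, hva⟩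
  calc infDist (γ₂ v) (γ₁ '' Ici 0) ≤ dist (γ₂ v) (σ v) + dist (σ v) (γ₁ s) :=
        (infDist_le_dist_of_mem (mem_image_of_mem _ hs)).trans (dist_triangle _ _ _)
    _ ≤ M (2 * C + 1) (9 * C) + 4 * C := by
        rw [dist_comm]
        linarith [hσγ v hv]

end

/-- There is `D₁ : 𝓜 × ℝ≥1 → ℝ≥1` such that any two `M`-Morse
`C`-quasi-geodesic rays with the same starting point and finite Hausdorff distance have
Hausdorff distance at most `D₁ M C`. -/
theorem statement6 : ∃ D₁ : (ℝ → ℝ → ℝ) → ℝ → ℝ,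
    (∀ M C, IsMorseGauge M → 1 ≤ C → 1 ≤ D₁ M C) ∧
    ∀ (X : Type u) [inst : MetricSpace X], GeodesicSpace X →
      ∀ (M : ℝ → ℝ → ℝ) (C : ℝ) (γ₁ γ₂ : ℝ → X),
        IsMorseGauge M → 1 ≤ C →
        IsQuasiGeodesicOn γ₁ (Ici 0) C C → IsMorseWith M γ₁ (Ici 0) →
        IsQuasiGeodesicOn γ₂ (Ici 0) C C → IsMorseWith M γ₂ (Ici 0) →
        γ₁ 0 = γ₂ 0 →
        EMetric.hausdorffEdist (γ₁ '' Ici 0) (γ₂ '' Ici 0) ≠ ⊤ →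
        Metric.hausdorffDist (γ₁ '' Ici 0) (γ₂ '' Ici 0) ≤ D₁ M C := by
  refine ⟨fun M C => max 1 (M (2 * C + 1) (9 * C) + 4 * C), fun M C _ _ => le_max_left _ _, ?_⟩
  intro X _ hX M C γ₁ γ₂ _ hC hq₁ hm₁ hq₂ hm₂ h0 hfin
  refine hausdorffDist_le_of_infDist (zero_le_one.trans (le_max_left _ _)) ?_ ?_
  · rintro _ ⟨v, hv, rfl⟩
    refine (infDist_le_of_isMorseWith hX hC hq₂ hm₂ hq₁ h0.symm ?_ hv).trans (le_max_right _ _)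
    rwa [hausdorffEDist_comm]
  · rintro _ ⟨v, hv, rfl⟩
    exact (infDist_le_of_isMorseWith hX hC hq₁ hm₁ hq₂ h0 hfin hv).trans (le_max_right _ _)
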